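/- Let 0 < q < p-1, 1 < p < ∞, 0 < α < n/p, and let σ be a nonnegative locally finite Borel measure on ℝⁿ. Then for every x ∈ ℝⁿ, W_{α,p}((W_{α,p}σ)^q dσ)(x) ≤ b(p,q) [ W_{α,p}((W_{α,p}σ)^{(p-1)q/(p-1-q)} dσ)(x) + W_{α,p}σ(x) ]. -/

import Mathlib

open MeasureTheory Metric Set

/-- The Wolff potential `W_{α,p}σ(x) = ∫_0^∞ (σ(B(x,t))/t^{n-αp})^{1/(p-1)} dt/t`. -/
noncomputable def wolff {n : ℕ} (α p : ℝ)
    (σ : Measure (EuclideanSpace ℝ (Fin n)))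
    (x : EuclideanSpace ℝ (Fin n)) : ENNReal :=
  ∫⁻ t in Ioi (0:ℝ),
    (σ (ball x t) / ENNReal.ofReal (t ^ ((n : ℝ) - α * p))) ^ (1 / (p - 1)) /
      ENNReal.ofReal t

/-
Write μ = (W_{α,p}σ)^q dσ and ν = (W_{α,p}σ)^{(p-1)q/(p-1-q)} dσ. On every ball B, Hölder's
inequality with exponents 1/s and 1/(1-s), where s = (p-1-q)/(p-1), gives μ(B) ≤ ν(B)^s σ(B)^(1-s).
Taking (p-1)-th roots and applying Young's inequality x^s y^(1-s) ≤ x + y, the integrand of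
W_{α,p}μ(x) is bounded by the sum of the integrands of W_{α,p}ν(x) and W_{α,p}σ(x); so b = 1 works.
-/

open scoped ENNReal

namespace ENNReal

theorem rpow_mul_rpow_one_sub_le_add {a b : ℝ≥0∞} {s : ℝ} (hs₀ : 0 < s) (hs₁ : s < 1) :
    a ^ s * b ^ (1 - s) ≤ a + b := by
  rcases eq_or_ne (a + b) ⊤ with h | h
  · simp [h]
  rcases eq_or_ne (a + b) 0 with h0 | h0
  · obtain ⟨rfl, rfl⟩ := add_eq_zero.mp h0
    simp [zero_rpow_of_pos hs₀, zero_rpow_of_pos (sub_pos.mpr hs₁)]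
  calc a ^ s * b ^ (1 - s)
      ≤ (a + b) ^ s * (a + b) ^ (1 - s) := by
        gcongr
        exacts [le_self_add, le_add_self]
    _ = a + b := by rw [← rpow_add _ _ h0 h, add_sub_cancel, rpow_one]

theorem div_le_rpow_mul_rpow_of_le {a b c : ℝ≥0∞} {s : ℝ} (hs₀ : 0 ≤ s) (hs₁ : s ≤ 1)
    (h : a ≤ b ^ s * c ^ (1 - s)) (d : ℝ≥0∞) :
    a / d ≤ (b / d) ^ s * (c / d) ^ (1 - s) := by
  have hd : d⁻¹ = d⁻¹ ^ s * d⁻¹ ^ (1 - s) := by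
    rw [← rpow_add_of_nonneg _ _ hs₀ (sub_nonneg.mpr hs₁), add_sub_cancel, rpow_one]
  calc a / d ≤ b ^ s * c ^ (1 - s) * (d⁻¹ ^ s * d⁻¹ ^ (1 - s)) := by
        rw [div_eq_mul_inv, ← hd]; gcongr
    _ = (b / d) ^ s * (c / d) ^ (1 - s) := by
        rw [div_eq_mul_inv, div_eq_mul_inv, mul_rpow_of_nonneg _ _ hs₀,
          mul_rpow_of_nonneg _ _ (sub_nonneg.mpr hs₁)]
        ring

theorem rpow_le_rpow_add_rpow_of_le {a b c : ℝ≥0∞} {s r : ℝ} (hs₀ : 0 < s) (hs₁ : s < 1)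
    (hr : 0 ≤ r) (h : a ≤ b ^ s * c ^ (1 - s)) : a ^ r ≤ b ^ r + c ^ r :=
  calc a ^ r ≤ (b ^ s * c ^ (1 - s)) ^ r := rpow_le_rpow h hr
    _ = (b ^ r) ^ s * (c ^ r) ^ (1 - s) := by
        rw [mul_rpow_of_nonneg _ _ hr, ← rpow_mul, ← rpow_mul, ← rpow_mul, ← rpow_mul,
          mul_comm s, mul_comm (1 - s)]
    _ ≤ b ^ r + c ^ r := rpow_mul_rpow_one_sub_le_add hs₀ hs₁

end ENNReal

namespace MeasureTheory

variable {α : Type*} [MeasurableSpace α] {μ : Measure α}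

theorem lintegral_rpow_le_lintegral_rpow_div_rpow_mul_measure_univ {f : α → ℝ≥0∞}
    (hf : AEMeasurable f μ) (q : ℝ) {s : ℝ} (hs₀ : 0 < s) (hs₁ : s < 1) :
    ∫⁻ a, f a ^ q ∂μ ≤ (∫⁻ a, f a ^ (q / s) ∂μ) ^ s * μ univ ^ (1 - s) := by
  have holder := ENNReal.lintegral_mul_le_Lp_mul_Lq μ (Real.HolderConjugate.inv_one_sub_inv hs₀ hs₁)
    (hf.pow_const q) (aemeasurable_const (b := (1 : ℝ≥0∞)))
  simpa [← ENNReal.rpow_mul, div_eq_mul_inv] using holder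

end MeasureTheory

section Wolff

variable {n : ℕ} {α p : ℝ}

theorem measurable_wolff (σ : Measure (EuclideanSpace ℝ (Fin n))) [SFinite σ] :
    Measurable (wolff α p σ) := by
  have hball : Measurable fun z : EuclideanSpace ℝ (Fin n) × ℝ => σ (ball z.1 z.2) :=
    measurable_measure_prodMk_left <| measurableSet_lt
      (measurable_snd.dist (measurable_fst.comp measurable_fst)) (measurable_snd.comp measurable_fst)
  exact (((hball.div (ENNReal.measurable_ofReal.comp (measurable_snd.pow_const _))).pow_const
    _).div (ENNReal.measurable_ofReal.comp measurable_snd)).lintegral_prod_right'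

theorem measurable_wolff_integrand (ρ : Measure (EuclideanSpace ℝ (Fin n)))
    (x : EuclideanSpace ℝ (Fin n)) :
    Measurable fun t : ℝ =>
      (ρ (ball x t) / ENNReal.ofReal (t ^ ((n : ℝ) - α * p))) ^ (1 / (p - 1)) /
        ENNReal.ofReal t := by
  have hmono : Monotone fun t : ℝ => ρ (ball x t) := fun _ _ h => measure_mono (ball_subset_ball h)
  exact ((hmono.measurable.div (ENNReal.measurable_ofReal.comp (measurable_id.pow_const _))).pow_const
    _).div ENNReal.measurable_ofReal

theorem wolff_le_wolff_add_wolff_of_ball_le {μ ν σ : Measure (EuclideanSpace ℝ (Fin n))}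
    {x : EuclideanSpace ℝ (Fin n)} {s : ℝ} (hp : 1 ≤ p) (hs₀ : 0 < s) (hs₁ : s < 1)
    (hball : ∀ t, μ (ball x t) ≤ ν (ball x t) ^ s * σ (ball x t) ^ (1 - s)) :
    wolff α p μ x ≤ wolff α p ν x + wolff α p σ x := by
  have hr : 0 ≤ 1 / (p - 1) := div_nonneg zero_le_one (sub_nonneg.mpr hp)
  unfold wolff
  rw [← lintegral_add_left (measurable_wolff_integrand ν x)]
  refine lintegral_mono fun t => ?_
  rw [← ENNReal.add_div]
  gcongr
  exact ENNReal.rpow_le_rpow_add_rpow_of_le hs₀ hs₁ hr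
    (ENNReal.div_le_rpow_mul_rpow_of_le hs₀.le hs₁.le (hball t) _)

end Wolff

theorem stmt16_general {n : ℕ} (α p q : ℝ) (σ : Measure (EuclideanSpace ℝ (Fin n)))
    [IsLocallyFiniteMeasure σ]
    (hp : 1 < p) (hq : 0 < q) (hqp : q < p - 1) :
    ∃ b : ENNReal, 0 < b ∧ b ≠ ⊤ ∧
      ∀ x : EuclideanSpace ℝ (Fin n),
        wolff α p (σ.withDensity fun y => (wolff α p σ y) ^ q) x
          ≤ b * (wolff α p
              (σ.withDensity fun y => (wolff α p σ y) ^ ((p - 1) * q / (p - 1 - q))) x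
            + wolff α p σ x) := by
  set s := (p - 1 - q) / (p - 1)
  have hs₀ : 0 < s := div_pos (by linarith) (by linarith)
  have hs₁ : s < 1 := (div_lt_one (by linarith)).mpr (by linarith)
  have hqs : q / s = (p - 1) * q / (p - 1 - q) := by
    rw [div_div_eq_mul_div, mul_comm]
  refine ⟨1, one_pos, ENNReal.one_ne_top, fun x => ?_⟩
  rw [one_mul]
  refine wolff_le_wolff_add_wolff_of_ball_le hp.le hs₀ hs₁ fun t => ?_
  rw [withDensity_apply _ measurableSet_ball, withDensity_apply _ measurableSet_ball, ← hqs,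
    ← Measure.restrict_apply_univ]
  exact lintegral_rpow_le_lintegral_rpow_div_rpow_mul_measure_univ
    (measurable_wolff σ).aemeasurable q hs₀ hs₁

theorem stmt16 {n : ℕ} (α p q : ℝ) (σ : Measure (EuclideanSpace ℝ (Fin n)))
    [IsLocallyFiniteMeasure σ]
    (hp : 1 < p) (hα : 0 < α) (hαn : α < n / p) (hq : 0 < q) (hqp : q < p - 1) :
    ∃ b : ENNReal, 0 < b ∧ b ≠ ⊤ ∧
      ∀ x : EuclideanSpace ℝ (Fin n),
        wolff α p (σ.withDensity fun y => (wolff α p σ y) ^ q) x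
          ≤ b * (wolff α p
              (σ.withDensity fun y => (wolff α p σ y) ^ ((p - 1) * q / (p - 1 - q))) x
            + wolff α p σ x) :=
  stmt16_general α p q σ hp hq hqp
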